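/- arXiv:math/0002070 — 2 statements merged into one kernel-verified Lean document; each statement's English description precedes it below -/
import Mathlib

section
/- Let G be a König-Egerváry graph and let e be an α-critical edge of G. Then the graph G − e obtained by deleting the edge e is again a König-Egerváry graph. -/
open scoped Classical

namespace KEG

variable {V : Type*}

/-- `S` is a stable (independent) set of vertices of `G`. -/
def IsStable (G : SimpleGraph V) (S : Finset V) : Prop :=
  ∀ ⦃x⦄, x ∈ S → ∀ ⦃y⦄, y ∈ S → ¬G.Adj x y

/-- The stability number `α(G)`: maximum cardinality of a stable set. -/
noncomputable def alphaNum (G : SimpleGraph V) : ℕ :=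
  sSup {n | ∃ S : Finset V, IsStable G S ∧ S.card = n}

/-- `S` is a maximum stable set of `G`. -/
def IsMaxStable (G : SimpleGraph V) (S : Finset V) : Prop :=
  IsStable G S ∧ S.card = alphaNum G

/-- `M` is a matching of `G`: a set of edges of `G`, pairwise non-incident. -/
def IsMatching (G : SimpleGraph V) (M : Finset (Sym2 V)) : Prop :=
  (∀ e ∈ M, e ∈ G.edgeSet) ∧
    ∀ e ∈ M, ∀ f ∈ M, e ≠ f → ∀ v : V, v ∈ e → v ∉ f

/-- The matching number `μ(G)`: maximum cardinality of a matching. -/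
noncomputable def muNum (G : SimpleGraph V) : ℕ :=
  sSup {n | ∃ M : Finset (Sym2 V), IsMatching G M ∧ M.card = n}

/-- A perfect matching: a matching covering every vertex. -/
def IsPerfectMatching (G : SimpleGraph V) (M : Finset (Sym2 V)) : Prop :=
  IsMatching G M ∧ ∀ v : V, ∃ e ∈ M, v ∈ e

/-- A maximal matching: a matching such that no edge of `G` can be added to it
while keeping pairwise non-incidence, i.e. every edge of `G` outside `M` is
incident to an edge of `M`. -/
def IsMaximalMatching (G : SimpleGraph V) (M : Finset (Sym2 V)) : Prop :=
  IsMatching G M ∧ ∀ e ∈ G.edgeSet, e ∉ M → ∃ f ∈ M, ∃ v : V, v ∈ e ∧ v ∈ f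

/-- `G` is a König-Egerváry graph: `α(G) + μ(G) = |V(G)|`. -/
def KonigEgervary (G : SimpleGraph V) [Fintype V] : Prop :=
  alphaNum G + muNum G = Fintype.card V

/-- `e` is an α-critical edge of `G`: `α(G - e) > α(G)`. -/
def IsAlphaCritical (G : SimpleGraph V) (e : Sym2 V) : Prop :=
  e ∈ G.edgeSet ∧ alphaNum G < alphaNum (G.deleteEdges {e})

/-- `e` is a μ-critical edge of `G`: `μ(G - e) < μ(G)`. -/
def IsMuCritical (G : SimpleGraph V) (e : Sym2 V) : Prop :=
  e ∈ G.edgeSet ∧ muNum (G.deleteEdges {e}) < muNum G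

/-- `core(G)`: the set of vertices belonging to every maximum stable set of `G`. -/
def core (G : SimpleGraph V) : Set V :=
  {v | ∀ S : Finset V, IsMaxStable G S → v ∈ S}

/-- `ξ(G) = |core(G)|`. -/
noncomputable def xi (G : SimpleGraph V) : ℕ := (core G).ncard

/-- `σ(G)`: the number of vertices belonging to no maximum stable set of `G`. -/
noncomputable def sigmaNum (G : SimpleGraph V) : ℕ :=
  {v : V | ∀ S : Finset V, IsMaxStable G S → v ∉ S}.ncard

/-- `η(G)`: the number of α-critical edges of `G`. -/
noncomputable def eta (G : SimpleGraph V) : ℕ :=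
  {e : Sym2 V | IsAlphaCritical G e}.ncard

/-- `N(A)`: the set of vertices adjacent to some vertex of `A`. -/
def nbhd (G : SimpleGraph V) (A : Set V) : Set V :=
  {v | ∃ a ∈ A, G.Adj a v}

/-- `N[A] = A ∪ N(A)`: the closed neighborhood of `A`. -/
def closedNbhd (G : SimpleGraph V) (A : Set V) : Set V :=
  A ∪ nbhd G A


/-! Every edge of a matching has an endpoint outside a given stable set, and distinct matching
edges have distinct endpoints, so `α(G) + μ(G) ≤ |V(G)|` for every graph. Deleting an edge lowers
`μ` by at most one, while deleting an α-critical edge raises `α` by at least one; hence the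
König-Egerváry equality of `G` forces the one of `G - e`. -/

section Bounds

variable [Fintype V] (G : SimpleGraph V)

lemma bddAbove_stable_card : BddAbove {n | ∃ S : Finset V, IsStable G S ∧ S.card = n} := by
  refine ⟨Fintype.card V, ?_⟩
  rintro _ ⟨S, -, rfl⟩
  exact S.card_le_univ

lemma bddAbove_matching_card :
    BddAbove {n | ∃ M : Finset (Sym2 V), IsMatching G M ∧ M.card = n} := by
  refine ⟨Fintype.card (Sym2 V), ?_⟩
  rintro _ ⟨M, -, rfl⟩
  exact M.card_le_univ

lemma exists_isMaxStable : ∃ S : Finset V, IsMaxStable G S := by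
  have h_empty : IsStable G ∅ := fun _ hx => by simp at hx
  exact Nat.sSup_mem (s := {n | ∃ S : Finset V, IsStable G S ∧ S.card = n}) ⟨0, ∅, h_empty, rfl⟩
    (bddAbove_stable_card G)

lemma exists_isMatching_card_eq_muNum :
    ∃ M : Finset (Sym2 V), IsMatching G M ∧ M.card = muNum G := by
  have h_empty : IsMatching G ∅ := ⟨by simp, by simp⟩
  exact Nat.sSup_mem (s := {n | ∃ M : Finset (Sym2 V), IsMatching G M ∧ M.card = n})
    ⟨0, ∅, h_empty, rfl⟩ (bddAbove_matching_card G)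

lemma IsMatching.card_le_muNum {M : Finset (Sym2 V)} (hM : IsMatching G M) : M.card ≤ muNum G :=
  le_csSup (bddAbove_matching_card G) ⟨M, hM, rfl⟩

end Bounds

lemma IsStable.exists_mem_notMem_of_mem_edgeSet {G : SimpleGraph V} {S : Finset V}
    (hS : IsStable G S) {f : Sym2 V} (hf : f ∈ G.edgeSet) : ∃ v ∈ f, v ∉ S := by
  induction f using Sym2.ind with
  | _ a b =>
    by_cases ha : a ∈ S
    · exact ⟨b, Sym2.mem_mk_right a b, fun hb => hS ha hb hf⟩
    · exact ⟨a, Sym2.mem_mk_left a b, ha⟩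

lemma IsStable.card_add_card_le_of_isMatching [Fintype V] {G : SimpleGraph V} {S : Finset V}
    (hS : IsStable G S) {M : Finset (Sym2 V)} (hM : IsMatching G M) :
    S.card + M.card ≤ Fintype.card V := by
  have hM_le : M.card ≤ Sᶜ.card := by
    refine Finset.card_le_card_of_forall_subsingleton (fun f v => v ∈ f) (fun f hf => ?_)
      (fun v _ f hf f' hf' => ?_)
    · obtain ⟨v, hvf, hvS⟩ := hS.exists_mem_notMem_of_mem_edgeSet (hM.1 f hf)
      exact ⟨v, Finset.mem_compl.2 hvS, hvf⟩
    · by_contra hne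
      exact hM.2 f hf.1 f' hf'.1 hne v hf.2 hf'.2
  rw [Finset.card_compl] at hM_le
  have := S.card_le_univ
  omega

lemma alphaNum_add_muNum_le [Fintype V] (G : SimpleGraph V) :
    alphaNum G + muNum G ≤ Fintype.card V := by
  obtain ⟨S, hS, hS_card⟩ := exists_isMaxStable G
  obtain ⟨M, hM, hM_card⟩ := exists_isMatching_card_eq_muNum G
  rw [← hS_card, ← hM_card]
  exact hS.card_add_card_le_of_isMatching hM

lemma IsMatching.erase {G : SimpleGraph V} {M : Finset (Sym2 V)} (hM : IsMatching G M)
    (e : Sym2 V) : IsMatching (G.deleteEdges {e}) (M.erase e) := by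
  refine ⟨fun f hf => ?_, fun f hf f' hf' => hM.2 f (Finset.mem_of_mem_erase hf) f'
    (Finset.mem_of_mem_erase hf')⟩
  rw [SimpleGraph.edgeSet_deleteEdges]
  exact ⟨hM.1 f (Finset.mem_of_mem_erase hf), Finset.ne_of_mem_erase hf⟩

lemma muNum_le_muNum_deleteEdges_add_one [Fintype V] (G : SimpleGraph V) (e : Sym2 V) :
    muNum G ≤ muNum (G.deleteEdges {e}) + 1 := by
  obtain ⟨M, hM, hM_card⟩ := exists_isMatching_card_eq_muNum G
  calc muNum G = M.card := hM_card.symm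
    _ ≤ (M.erase e).card + 1 := by have := M.pred_card_le_card_erase (a := e); omega
    _ ≤ muNum (G.deleteEdges {e}) + 1 := by gcongr; exact (hM.erase e).card_le_muNum

/-- If `G` is a König-Egerváry graph and `e` is an α-critical edge of `G`,
then `G - e` is again a König-Egerváry graph. -/
theorem stmt_0 {V : Type*} [Fintype V] (G : SimpleGraph V)
    (hG : KonigEgervary G) (e : Sym2 V) (he : IsAlphaCritical G e) :
    KonigEgervary (G.deleteEdges {e}) := by
  have h_le := alphaNum_add_muNum_le (G.deleteEdges {e})
  have h_mu := muNum_le_muNum_deleteEdges_add_one G e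
  have h_alpha := he.2
  unfold KonigEgervary at hG ⊢
  omega

end KEG
end

section
/- If a tree T has a perfect matching M, then every edge of M is α-critical and 2·α(T) = |V(T)|. -/
/-
Every edge of a perfect matching `M` contains at most one vertex of a stable set, so
`α ≤ |M| = |V|/2`; the two colour classes of a tree cover `V`, so one of them attains
`|M|`. For `e = uv ∈ M`, the forest `T - e` has `u` and `v` in different components, so it
has a 2-colouring giving `u` and `v` the same colour. The other colour class is then stable
in `T` and misses the matching edge `e`, so it has fewer than `|M|` vertices, and the class
of `u` and `v`, stable in `T - e`, has more than `|M|`.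
-/

open scoped Classical

namespace KEG

variable {V : Type*}

section Stable

variable {G : SimpleGraph V} {S : Finset V}

lemma alphaNum_le {n : ℕ} (h : ∀ S, IsStable G S → S.card ≤ n) : alphaNum G ≤ n :=
  csSup_le ⟨0, ∅, fun _ hx => absurd hx (Finset.notMem_empty _), rfl⟩
    (by rintro _ ⟨S, hS, rfl⟩; exact h S hS)

lemma IsStable.card_le_alphaNum [Fintype V] (hS : IsStable G S) : S.card ≤ alphaNum G :=
  le_csSup ⟨Fintype.card V, by rintro _ ⟨S, -, rfl⟩; exact S.card_le_univ⟩ ⟨S, hS, rfl⟩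

lemma IsStable.of_deleteEdges {u v : V} (hS : IsStable (G.deleteEdges {s(u, v)}) S)
    (hu : u ∉ S) (hv : v ∉ S) : IsStable G S := by
  intro x hx y hy hxy
  refine hS hx hy (SimpleGraph.deleteEdges_adj.2 ⟨hxy, ?_⟩)
  rintro (h : s(x, y) = s(u, v))
  rcases Sym2.eq_iff.1 h with ⟨rfl, -⟩ | ⟨rfl, -⟩
  · exact hu hx
  · exact hv hx

lemma IsStable.card_filter_mem_le_one (hS : IsStable G S) {e : Sym2 V} (he : e ∈ G.edgeSet) :
    (S.filter (· ∈ e)).card ≤ 1 := by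
  refine Finset.card_le_one.2 fun x hx y hy => by_contra fun hxy => ?_
  rw [Finset.mem_filter] at hx hy
  rw [(Sym2.mem_and_mem_iff hxy).1 ⟨hx.2, hy.2⟩] at he
  exact hS hx.1 hy.1 he

end Stable

section Coloring

variable {G : SimpleGraph V} {α : Type*}

lemma isStable_colorClass [Fintype V] [DecidableEq α] (C : G.Coloring α) (a : α) :
    IsStable G (Finset.univ.filter (C · = a)) := by
  intro x hx y hy hxy
  simp only [Finset.mem_filter, Finset.mem_univ, true_and] at hx hy
  exact C.valid hxy (hx.trans hy.symm)

lemma isStable_filter_ne_of_coloring_fin_two [Fintype V] (C : G.Coloring (Fin 2)) (a : Fin 2) :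
    IsStable G (Finset.univ.filter (C · ≠ a)) := by
  intro x hx y hy hxy
  simp only [Finset.mem_filter, Finset.mem_univ, true_and] at hx hy
  exact C.valid hxy (by omega)

/-- Swapping the colours of `u` and `v` on the component of `u` keeps the colouring proper. -/
lemma exists_coloring_apply_eq_of_not_reachable (C : G.Coloring α) {u v : V}
    (huv : ¬ G.Reachable u v) : ∃ C' : G.Coloring α, C' u = C' v := by
  let f : V → α := fun w => if G.Reachable u w then Equiv.swap (C u) (C v) (C w) else C w
  refine ⟨SimpleGraph.Coloring.mk f fun {x y} hxy => ?_, show f u = f v by simp [f, huv]⟩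
  by_cases hx : G.Reachable u x
  · have hy : G.Reachable u y := hx.trans hxy.reachable
    simpa [f, hx, hy] using C.valid hxy
  · have hy : ¬ G.Reachable u y := fun hy => hx (hy.trans hxy.symm.reachable)
    simpa [f, hx, hy] using C.valid hxy

end Coloring

namespace IsPerfectMatching

variable {G : SimpleGraph V} {M : Finset (Sym2 V)} {S : Finset V}

lemma card_eq_sum_card_filter_mem (hM : IsPerfectMatching G M) (S : Finset V) :
    S.card = ∑ e ∈ M, (S.filter (· ∈ e)).card := by
  rw [← Finset.card_biUnion]
  · congr 1
    ext v
    simp only [Finset.mem_biUnion, Finset.mem_filter]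
    obtain ⟨e, he, hve⟩ := hM.2 v
    exact ⟨fun hv => ⟨e, he, hv, hve⟩, fun ⟨_, _, hv, _⟩ => hv⟩
  · intro e he f hf hef
    simp only [Function.onFun, Finset.disjoint_left, Finset.mem_filter]
    exact fun v hve hvf => hM.1.2 e he f hf hef v hve.2 hvf.2

lemma card_eq_two_mul [Fintype V] (hM : IsPerfectMatching G M) :
    Fintype.card V = 2 * M.card := by
  rw [← Finset.card_univ, hM.card_eq_sum_card_filter_mem, mul_comm, ← smul_eq_mul,
    ← Finset.sum_const]
  refine Finset.sum_congr rfl fun e he => ?_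
  rw [← Sym2.card_toFinset_of_not_isDiag e (G.not_isDiag_of_mem_edgeSet (hM.1.1 e he))]
  congr 1
  ext v
  simp [Sym2.mem_toFinset]

lemma card_le_of_isStable (hM : IsPerfectMatching G M) (hS : IsStable G S) :
    S.card ≤ M.card := by
  rw [hM.card_eq_sum_card_filter_mem, Finset.card_eq_sum_ones M]
  exact Finset.sum_le_sum fun e he => hS.card_filter_mem_le_one (hM.1.1 e he)

lemma card_lt_of_isStable (hM : IsPerfectMatching G M) (hS : IsStable G S) {e : Sym2 V}
    (he : e ∈ M) (hSe : ∀ v ∈ e, v ∉ S) : S.card < M.card := by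
  have h0 : (S.filter (· ∈ e)).card = 0 :=
    Finset.card_eq_zero.2 (Finset.filter_eq_empty_iff.2 fun v hv hve => hSe v hve hv)
  rw [hM.card_eq_sum_card_filter_mem, ← Finset.add_sum_erase M _ he, h0, zero_add,
    ← Finset.card_erase_add_one he, Finset.card_eq_sum_ones (M.erase e)]
  exact Nat.lt_succ_of_le <| Finset.sum_le_sum fun f hf =>
    hS.card_filter_mem_le_one (hM.1.1 f (Finset.mem_of_mem_erase hf))

lemma alphaNum_le (hM : IsPerfectMatching G M) : alphaNum G ≤ M.card :=
  KEG.alphaNum_le fun _ => hM.card_le_of_isStable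

lemma alphaNum_eq [Fintype V] (hM : IsPerfectMatching G M) (hG : G.Colorable 2) :
    alphaNum G = M.card := by
  obtain ⟨C⟩ := hG
  have h₁ := (isStable_colorClass C 0).card_le_alphaNum
  have h₂ := (isStable_filter_ne_of_coloring_fin_two C 0).card_le_alphaNum
  have hV : (Finset.univ.filter (C · = 0)).card + (Finset.univ.filter (C · ≠ 0)).card
      = 2 * M.card := by
    rw [Finset.card_filter_add_card_filter_not, Finset.card_univ, hM.card_eq_two_mul]
  have := hM.alphaNum_le
  omega

lemma isAlphaCritical_of_isAcyclic [Fintype V] (hM : IsPerfectMatching G M)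
    (hG : G.IsAcyclic) {e : Sym2 V} (he : e ∈ M) : IsAlphaCritical G e := by
  induction e using Sym2.ind with | _ u v => ?_
  have huv : G.Adj u v := hM.1.1 _ he
  obtain ⟨C₀⟩ := (hG.anti (G.deleteEdges_le {s(u, v)})).colorable_two
  obtain ⟨C, hC⟩ := exists_coloring_apply_eq_of_not_reachable C₀
    (SimpleGraph.isBridge_iff.1 (SimpleGraph.isAcyclic_iff_forall_adj_isBridge.1 hG huv))
  have hS : IsStable G (Finset.univ.filter (C · ≠ C u)) :=
    (isStable_filter_ne_of_coloring_fin_two C (C u)).of_deleteEdges (by simp) (by simp [hC])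
  have hlt : (Finset.univ.filter (C · ≠ C u)).card < M.card :=
    hM.card_lt_of_isStable hS he (by simp [hC])
  have hV : (Finset.univ.filter (C · = C u)).card + (Finset.univ.filter (C · ≠ C u)).card
      = 2 * M.card := by
    rw [Finset.card_filter_add_card_filter_not, Finset.card_univ, hM.card_eq_two_mul]
  refine ⟨huv, ?_⟩
  calc alphaNum G ≤ M.card := hM.alphaNum_le
    _ < (Finset.univ.filter (C · = C u)).card := by omega
    _ ≤ _ := (isStable_colorClass C (C u)).card_le_alphaNum

end IsPerfectMatching

/-- If a tree `T` has a perfect matching `M`, then all edges of `M` are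
α-critical and `2·α(T) = |V(T)|`. -/
theorem stmt_5 {V : Type*} [Fintype V] (T : SimpleGraph V) (hT : T.IsTree)
    (M : Finset (Sym2 V)) (hM : IsPerfectMatching T M) :
    (∀ e ∈ M, IsAlphaCritical T e) ∧ 2 * alphaNum T = Fintype.card V :=
  ⟨fun _ => hM.isAlphaCritical_of_isAcyclic hT.isAcyclic,
    by rw [hM.alphaNum_eq hT.colorable_two, hM.card_eq_two_mul]⟩

end KEG
end
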